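/- Let σ₁, …, σ_k be a regular sequence in a commutative ring A and let I = (σ₁, …, σ_k). Then the Rees algebra ⊕_{n≥0} I^n t^n is isomorphic as a graded A-algebra to A[u₁, …, u_k]/J, where each u_i has degree 1 and J is the ideal generated by the elements σ_i u_j − σ_j u_i for 1 ≤ i < j ≤ k (u_i mapping to σ_i t). -/

import Mathlib

set_option synthInstance.maxHeartbeats 1000000

noncomputable section

/-- The degree-`n` graded piece `Iⁿ tⁿ` of the Rees algebra of an ideal `I ⊆ A`,
as an `A`-submodule of `A[t]`. -/
def reesPieceP (A : Type) [CommRing A] (I : Ideal A) (n : ℕ) : Submodule A (Polynomial A) :=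
  Submodule.span A {f | ∃ a ∈ I ^ n, f = Polynomial.C a * Polynomial.X ^ n}

/-!
The map `uᵢ ↦ σᵢ t` is onto the Rees algebra because both sides are generated in degree one, and
its kernel is homogeneous; the point is that every homogeneous relation `F(σ) = 0` is a
combination of the Koszul relations `σᵢ uⱼ - σⱼ uᵢ`. Write `Iₛ` for the ideal of the `σᵢ` with
`i ∈ s`. The elements of the sequence are adjoined one at a time, `σⱼ` being a nonzerodivisor
modulo `Iₛ`.

A form `P = Σ uᵢ Qᵢ` of degree `d + 1` in the variables of `s` yields `P' = Σ σᵢ Qᵢ` of degree `d`,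
with coefficients in `Iₛ`, `P'(σ) = P(σ)`, and `σⱼ P - uⱼ P'` Koszul. Subtracting such a `P'` from
a form `F` of degree `d` with `F(σ) ∈ Iₛ^(d+1)` leaves a relation, so the coefficients of `F` lie
in `Iₛ`. Applied to `F = σⱼ Q` with `Q(σ) = a`, this and the regularity of `σⱼ` show, by induction
on `e`, that `σⱼ a ∈ Iₛ^e` forces `a ∈ Iₛ^e`.
Finally split a relation as `F = uⱼ H + G` with `G` free of `uⱼ`. Then `σⱼ H(σ) = -G(σ)` lies in
`Iₛ^(d+1)`, so `H(σ) = K(σ)` for a form `K` of degree `d + 1` in the variables of `s`, and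
`F = uⱼ (H - K') + (G + σⱼ K) - (σⱼ K - uⱼ K')` is made of a relation of lower degree, a relation
in fewer variables and a Koszul term.
-/

namespace Submodule

variable {R B : Type*} [CommSemiring R] [CommSemiring B] [Algebra R B]

theorem sup_pow_succ_le (M N : Submodule R B) (n : ℕ) :
    (M ⊔ N) ^ (n + 1) ≤ M * (M ⊔ N) ^ n ⊔ N ^ (n + 1) := by
  induction n with
  | zero => simp
  | succ n ih =>
    have hM : M * (M ⊔ N) ^ n ≤ (M ⊔ N) ^ (n + 1) := by
      rw [pow_succ']
      gcongr
      exact le_sup_left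
    have hN : N * (M ⊔ N) ^ n ≤ (M ⊔ N) ^ (n + 1) := by
      rw [pow_succ']
      gcongr
      exact le_sup_right
    have hN' : N ^ (n + 1) ≤ (M ⊔ N) ^ (n + 1) := by
      gcongr
      exact le_sup_right
    calc (M ⊔ N) ^ (n + 2) = (M ⊔ N) * (M ⊔ N) ^ (n + 1) := pow_succ' _ _
      _ ≤ (M ⊔ N) * (M * (M ⊔ N) ^ n ⊔ N ^ (n + 1)) := by gcongr
      _ = M * (M * (M ⊔ N) ^ n) ⊔ M * N ^ (n + 1) ⊔
            (M * (N * (M ⊔ N) ^ n) ⊔ N ^ (n + 2)) := by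
        rw [sup_mul, mul_sup, mul_sup, mul_left_comm N M, pow_succ' N (n + 1)]
      _ ≤ M * (M ⊔ N) ^ (n + 1) ⊔ N ^ (n + 2) := by
        refine sup_le (le_sup_of_le_left (sup_le ?_ ?_))
          (sup_le (le_sup_of_le_left ?_) le_sup_right)
        all_goals gcongr

end Submodule

namespace MvPolynomial

variable {ι A : Type*} [CommRing A]

variable (A) in
/-- Its `d`-th power is the module of forms of degree `d` in the variables indexed by `s`. -/
def linearForms (s : Set ι) : Submodule A (MvPolynomial ι A) :=
  Submodule.span A (X '' s)

def koszulIdeal (σ : ι → A) (s : Set ι) : Ideal (MvPolynomial ι A) :=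
  Ideal.span {f | ∃ i ∈ s, ∃ j ∈ s, f = C (σ i) * X j - C (σ j) * X i}

variable {σ : ι → A} {s : Set ι} {d : ℕ}

theorem linearForms_mono {s t : Set ι} (h : s ⊆ t) : linearForms A s ≤ linearForms A t :=
  Submodule.span_mono (Set.image_mono h)

theorem koszulIdeal_mono {s t : Set ι} (h : s ⊆ t) : koszulIdeal σ s ≤ koszulIdeal σ t :=
  Ideal.span_mono fun _ ⟨i, hi, j, hj, hf⟩ => ⟨i, h hi, j, h hj, hf⟩

theorem linearForms_univ_pow (d : ℕ) :
    linearForms A (Set.univ : Set ι) ^ d = homogeneousSubmodule ι A d := by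
  rw [linearForms, Set.image_univ, ← homogeneousSubmodule_one_eq_span_X,
    homogeneousSubmodule_one_pow]

theorem map_aeval_linearForms_pow (σ : ι → A) (s : Set ι) (d : ℕ) :
    (linearForms A s ^ d).map (aeval σ).toLinearMap = Ideal.span (σ '' s) ^ d := by
  rw [Submodule.map_pow, linearForms, Submodule.map_span, ← Set.image_comp]
  congr
  ext i
  simp

theorem aeval_mem_pow {F : MvPolynomial ι A} (hF : F ∈ linearForms A s ^ d) :
    aeval σ F ∈ Ideal.span (σ '' s) ^ d := by
  rw [← map_aeval_linearForms_pow]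
  exact Submodule.mem_map_of_mem hF

theorem exists_mem_linearForms_pow_aeval_eq {a : A} (ha : a ∈ Ideal.span (σ '' s) ^ d) :
    ∃ F ∈ linearForms A s ^ d, aeval σ F = a := by
  rwa [← map_aeval_linearForms_pow] at ha

theorem eq_zero_of_mem_one_of_aeval_eq_zero {F : MvPolynomial ι A}
    (hF : F ∈ (1 : Submodule A (MvPolynomial ι A))) (h : aeval σ F = 0) : F = 0 := by
  obtain ⟨c, rfl⟩ := Submodule.mem_one.1 hF
  rw [AlgHom.commutes, Algebra.algebraMap_self, RingHom.id_apply] at h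
  rw [h, map_zero]

theorem monomial_mem_linearForms_pow {m : ι →₀ ℕ} (hm : ↑m.support ⊆ s) (c : A) :
    monomial m c ∈ linearForms A s ^ m.degree := by
  induction m using Finsupp.induction generalizing c with
  | zero => simp
  | single_add a b f ha hb ih =>
    rw [Finsupp.support_single_add ha hb, Finset.coe_cons, Set.insert_subset_iff] at hm
    rw [map_add, Finsupp.degree_single, monomial_single_add, pow_add]
    exact Submodule.mul_mem_mul
      (Submodule.pow_mem_pow _ (Submodule.subset_span (Set.mem_image_of_mem X hm.1)) _) (ih hm.2 c)

theorem linearForms_pow_le_homogeneousSubmodule (s : Set ι) (d : ℕ) :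
    linearForms A s ^ d ≤ homogeneousSubmodule ι A d := by
  rw [← linearForms_univ_pow]
  gcongr
  exact linearForms_mono (Set.subset_univ s)

theorem linearForms_pow_le_supported (s : Set ι) (d : ℕ) :
    linearForms A s ^ d ≤ Subalgebra.toSubmodule (supported A s) := by
  induction d with
  | zero => exact Submodule.one_le.2 (one_mem (supported A s))
  | succ d ih =>
    have h1 : linearForms A s ≤ Subalgebra.toSubmodule (supported A s) :=
      Submodule.span_le.2 (Algebra.subset_adjoin (s := X '' s))
    rw [pow_succ']
    exact (mul_le_mul' h1 ih).trans_eq (Subalgebra.isIdempotentElem_toSubmodule _)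

theorem aeval_mem_mul_pow_of_mem_map_C {𝔞 : Ideal A} {G : MvPolynomial ι A}
    (hG : G ∈ linearForms A s ^ d) (hG𝔞 : G ∈ Ideal.map C 𝔞) :
    aeval σ G ∈ 𝔞 * Ideal.span (σ '' s) ^ d := by
  rw [G.as_sum, map_sum]
  refine Ideal.sum_mem _ fun m hm => ?_
  have hdeg : m.degree = d := by
    rw [Finsupp.degree_eq_weight_one]
    exact linearForms_pow_le_homogeneousSubmodule s d hG (mem_support_iff.1 hm)
  have hsupp : ↑m.support ⊆ s := fun i hi =>
    mem_supported.1 (linearForms_pow_le_supported s d hG)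
      ((mem_vars_iff_mem_support i).2 ⟨m, hm, hi⟩)
  have hmono := monomial_mem_linearForms_pow hsupp (1 : A)
  rw [hdeg] at hmono
  have hc : aeval σ (monomial m (G.coeff m)) = G.coeff m * aeval σ (monomial m (1 : A)) := by
    simp [aeval_monomial]
  rw [hc]
  exact Submodule.mul_mem_mul (mem_map_C_iff.1 hG𝔞 m) (aeval_mem_pow hmono)

theorem koszulIdeal_le_map_C : koszulIdeal σ s ≤ Ideal.map C (Ideal.span (σ '' s)) := by
  refine Ideal.span_le.2 ?_
  rintro _ ⟨i, hi, j, hj, rfl⟩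
  have hC : ∀ l ∈ s, C (σ l) ∈ Ideal.map (C : A →+* MvPolynomial ι A) (Ideal.span (σ '' s)) :=
    fun l hl => Ideal.mem_map_of_mem _ (Ideal.subset_span ⟨l, hl, rfl⟩)
  exact sub_mem (Ideal.mul_mem_right _ _ (hC i hi)) (Ideal.mul_mem_right _ _ (hC j hj))

theorem smul_le_map_C (I : Ideal A) (W : Submodule A (MvPolynomial ι A)) :
    I • W ≤ (Ideal.map C I).restrictScalars A :=
  Submodule.smul_le.2 fun a ha w _ => by
    rw [smul_eq_C_mul]
    exact Ideal.mul_mem_right _ _ (Ideal.mem_map_of_mem _ ha)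

theorem C_mul_sub_X_mul_mem_koszulIdeal {L : MvPolynomial ι A} (hL : L ∈ linearForms A s)
    (j : ι) : C (σ j) * L - X j * C (aeval σ L) ∈ koszulIdeal σ (insert j s) := by
  induction hL using Submodule.span_induction with
  | mem x hx =>
    obtain ⟨i, hi, rfl⟩ := hx
    rw [aeval_X, mul_comm (X j)]
    exact Ideal.subset_span ⟨j, Set.mem_insert _ _, i, Set.mem_insert_of_mem _ hi, rfl⟩
  | zero => simp
  | add x y _ _ hx hy =>
    convert add_mem hx hy using 1
    simp only [map_add]
    ring
  | smul a x _ hx =>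
    convert Ideal.mul_mem_left _ (C a) hx using 1
    simp only [smul_eq_C_mul, map_mul, aeval_C, Algebra.algebraMap_self, RingHom.id_apply]
    ring

theorem exists_lower_degree_of_mem_pow_succ {P : MvPolynomial ι A}
    (hP : P ∈ linearForms A s ^ (d + 1)) :
    ∃ P' ∈ Ideal.span (σ '' s) • linearForms A s ^ d, aeval σ P' = aeval σ P ∧
      ∀ j, C (σ j) * P - X j * P' ∈ koszulIdeal σ (insert j s) := by
  rw [pow_succ'] at hP
  induction hP using Submodule.mul_induction_on' with
  | mem_mul_mem L hL Q hQ =>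
    have hLσ : aeval σ L ∈ Ideal.span (σ '' s) := by
      simpa using aeval_mem_pow (σ := σ) (d := 1) (by rwa [pow_one])
    refine ⟨aeval σ L • Q, Submodule.smul_mem_smul hLσ hQ, by simp, fun j => ?_⟩
    convert Ideal.mul_mem_left _ Q (C_mul_sub_X_mul_mem_koszulIdeal hL j) using 1
    rw [smul_eq_C_mul]
    ring
  | add x _ y _ hx hy =>
    obtain ⟨x', hx', hxσ, hxK⟩ := hx
    obtain ⟨y', hy', hyσ, hyK⟩ := hy
    refine ⟨x' + y', add_mem hx' hy', by rw [map_add, map_add, hxσ, hyσ], fun j => ?_⟩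
    convert add_mem (hxK j) (hyK j) using 1
    ring

theorem exists_X_mul_add_of_mem_pow_succ {j : ι} {F : MvPolynomial ι A}
    (hF : F ∈ linearForms A (insert j s) ^ (d + 1)) :
    ∃ H ∈ linearForms A (insert j s) ^ d, ∃ G ∈ linearForms A s ^ (d + 1), F = X j * H + G := by
  rw [linearForms, Set.image_insert_eq, Submodule.span_insert] at hF ⊢
  obtain ⟨y, hy, G, hG, rfl⟩ := Submodule.mem_sup.1 (Submodule.sup_pow_succ_le _ _ d hF)
  obtain ⟨H, hH, rfl⟩ := Submodule.mem_span_singleton_mul.1 hy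
  exact ⟨H, hH, G, hG, rfl⟩

variable (σ s) in
def RelationsAreKoszul : Prop :=
  ∀ d, ∀ F ∈ linearForms A s ^ d, aeval σ F = 0 → F ∈ koszulIdeal σ s

theorem relationsAreKoszul_empty : RelationsAreKoszul σ ∅ := by
  intro d F hF hFσ
  have hle : linearForms A (∅ : Set ι) ^ d ≤ 1 := by
    rw [linearForms, Set.image_empty, Submodule.span_empty]
    cases d with
    | zero => exact (pow_zero _).le
    | succ d =>
      rw [pow_succ, Submodule.mul_bot]
      exact bot_le
  rw [eq_zero_of_mem_one_of_aeval_eq_zero (hle hF) hFσ]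
  exact zero_mem _

theorem RelationsAreKoszul.mem_map_C_of_aeval_mem_pow_succ (hK : RelationsAreKoszul σ s)
    {F : MvPolynomial ι A} (hF : F ∈ linearForms A s ^ d)
    (hFσ : aeval σ F ∈ Ideal.span (σ '' s) ^ (d + 1)) :
    F ∈ Ideal.map C (Ideal.span (σ '' s)) := by
  obtain ⟨P, hP, hPσ⟩ := exists_mem_linearForms_pow_aeval_eq hFσ
  obtain ⟨P', hP', hP'σ, -⟩ := exists_lower_degree_of_mem_pow_succ (σ := σ) hP
  have hdiff : F - P' ∈ koszulIdeal σ s :=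
    hK d _ (sub_mem hF (Submodule.smul_le_right hP')) (by rw [map_sub, hP'σ, hPσ, sub_self])
  simpa using add_mem (koszulIdeal_le_map_C hdiff) (smul_le_map_C _ _ hP')

theorem RelationsAreKoszul.mem_pow_of_mul_mem_pow (hK : RelationsAreKoszul σ s) {j : ι}
    (hj : ∀ a, σ j * a ∈ Ideal.span (σ '' s) → a ∈ Ideal.span (σ '' s)) (e : ℕ) {a : A}
    (ha : σ j * a ∈ Ideal.span (σ '' s) ^ e) : a ∈ Ideal.span (σ '' s) ^ e := by
  induction e generalizing a with
  | zero => simp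
  | succ e ih =>
    obtain ⟨G, hG, rfl⟩ :=
      exists_mem_linearForms_pow_aeval_eq (ih (Ideal.pow_le_pow_right (Nat.le_succ e) ha))
    have hσG : C (σ j) * G ∈ Ideal.map C (Ideal.span (σ '' s)) := by
      refine hK.mem_map_C_of_aeval_mem_pow_succ (d := e) ?_ ?_
      · rw [← smul_eq_C_mul]
        exact Submodule.smul_mem _ _ hG
      · rwa [map_mul, aeval_C, Algebra.algebraMap_self, RingHom.id_apply]
    have hG' : G ∈ Ideal.map C (Ideal.span (σ '' s)) :=
      mem_map_C_iff.2 fun m => hj _ (by simpa [coeff_C_mul] using mem_map_C_iff.1 hσG m)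
    rw [pow_succ']
    exact aeval_mem_mul_pow_of_mem_map_C hG hG'

theorem RelationsAreKoszul.insert_of_regular (hK : RelationsAreKoszul σ s) {j : ι}
    (hj : ∀ a, σ j * a ∈ Ideal.span (σ '' s) → a ∈ Ideal.span (σ '' s)) :
    RelationsAreKoszul σ (insert j s) := by
  have hsub : s ⊆ insert j s := Set.subset_insert j s
  intro d
  induction d with
  | zero =>
    intro F hF hFσ
    rw [eq_zero_of_mem_one_of_aeval_eq_zero (by rwa [pow_zero] at hF) hFσ]
    exact zero_mem _
  | succ d ih =>
    intro F hF hFσ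
    obtain ⟨H, hH, G, hG, rfl⟩ := exists_X_mul_add_of_mem_pow_succ hF
    have hrel : aeval σ G + σ j * aeval σ H = 0 := by
      rw [← hFσ, map_add, map_mul, aeval_X]
      ring
    have hHσ : aeval σ H ∈ Ideal.span (σ '' s) ^ (d + 1) := by
      refine hK.mem_pow_of_mul_mem_pow hj _ ?_
      rw [eq_neg_of_add_eq_zero_right hrel]
      exact neg_mem (aeval_mem_pow hG)
    obtain ⟨K, hK', hKσ⟩ := exists_mem_linearForms_pow_aeval_eq hHσ
    obtain ⟨K', hK'', hK'σ, hKK'⟩ := exists_lower_degree_of_mem_pow_succ (σ := σ) hK'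
    have hlower : H - K' ∈ koszulIdeal σ (insert j s) := by
      refine ih _ (sub_mem hH ?_) (by rw [map_sub, hK'σ, hKσ, sub_self])
      exact pow_le_pow_left' (linearForms_mono hsub) d (Submodule.smul_le_right hK'')
    have hfewer : G + C (σ j) * K ∈ koszulIdeal σ (insert j s) := by
      refine koszulIdeal_mono hsub (hK _ _ (add_mem hG ?_) ?_)
      · rw [← smul_eq_C_mul]
        exact Submodule.smul_mem _ _ hK'
      · rw [map_add, map_mul, aeval_C, Algebra.algebraMap_self, RingHom.id_apply, hKσ, hrel]
    have hF : X j * H + G = X j * (H - K') + (G + C (σ j) * K) - (C (σ j) * K - X j * K') := by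
      ring
    rw [hF]
    exact sub_mem (add_mem (Ideal.mul_mem_left _ _ hlower) hfewer) (hKK' j)

theorem koszulIdeal_univ_eq_span_lt [LinearOrder ι] (σ : ι → A) :
    koszulIdeal σ Set.univ =
      Ideal.span {f | ∃ i j : ι, i < j ∧ f = C (σ i) * X j - C (σ j) * X i} := by
  refine le_antisymm (Ideal.span_le.2 ?_) (Ideal.span_mono ?_)
  · rintro _ ⟨i, -, j, -, rfl⟩
    rcases lt_trichotomy i j with h | rfl | h
    · exact Ideal.subset_span ⟨i, j, h, rfl⟩
    · simp
    · rw [← neg_sub]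
      exact neg_mem (Ideal.subset_span ⟨j, i, h, rfl⟩)
  · rintro _ ⟨i, j, -, rfl⟩
    exact ⟨i, Set.mem_univ _, j, Set.mem_univ _, rfl⟩

def reesPresentation (σ : ι → A) : MvPolynomial ι A →ₐ[A] Polynomial A :=
  aeval fun i => Polynomial.C (σ i) * Polynomial.X

theorem reesPresentation_X (i : ι) :
    reesPresentation σ (X i) = Polynomial.C (σ i) * Polynomial.X :=
  aeval_X _ i

theorem reesPresentation_apply_of_isHomogeneous {F : MvPolynomial ι A} {n : ℕ}
    (hF : F.IsHomogeneous n) : reesPresentation σ F = Polynomial.monomial n (aeval σ F) := by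
  rw [← mem_homogeneousSubmodule, ← linearForms_univ_pow] at hF
  induction n generalizing F with
  | zero =>
    obtain ⟨c, rfl⟩ := Submodule.mem_one.1 (by rwa [pow_zero] at hF)
    simp
  | succ n ih =>
    rw [pow_succ'] at hF
    induction hF using Submodule.mul_induction_on' with
    | mem_mul_mem L hL Q hQ =>
      have hL1 : reesPresentation σ L = Polynomial.monomial 1 (aeval σ L) := by
        induction hL using Submodule.span_induction with
        | mem x hx =>
          obtain ⟨i, -, rfl⟩ := hx
          rw [reesPresentation_X, aeval_X, Polynomial.C_mul_X_eq_monomial]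
        | zero => simp
        | add x y _ _ hx hy => rw [map_add, map_add, hx, hy, map_add]
        | smul a x _ hx => rw [map_smul, map_smul, hx, map_smul]
      rw [map_mul, map_mul, hL1, ih hQ, Polynomial.monomial_mul_monomial, add_comm]
    | add x _ y _ hx hy => rw [map_add, map_add, hx, hy, map_add]

theorem coeff_reesPresentation (F : MvPolynomial ι A) (n : ℕ) :
    (reesPresentation σ F).coeff n = aeval σ (homogeneousComponent n F) := by
  conv_lhs => rw [← sum_homogeneousComponent F]
  simp only [map_sum, Polynomial.finsetSum_coeff,
    reesPresentation_apply_of_isHomogeneous (homogeneousComponent_isHomogeneous _ F),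
    Polynomial.coeff_monomial, Finset.sum_ite_eq', Finset.mem_range]
  split_ifs with h
  · rfl
  · rw [homogeneousComponent_eq_zero _ _ (by omega), map_zero]

theorem range_reesPresentation (σ : ι → A) :
    (reesPresentation σ).range = reesAlgebra (Ideal.span (Set.range σ)) := by
  rw [reesPresentation, ← Algebra.adjoin_range_eq_range_aeval, ← adjoin_monomial_eq_reesAlgebra,
    Submodule.map_span, Algebra.adjoin_span, ← Set.range_comp]
  congr
  ext i
  simp [Polynomial.C_mul_X_eq_monomial]

theorem ker_reesPresentation (hK : RelationsAreKoszul σ Set.univ) :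
    RingHom.ker (reesPresentation σ) = koszulIdeal σ Set.univ := by
  refine le_antisymm (fun F hF => ?_) (Ideal.span_le.2 ?_)
  · rw [← sum_homogeneousComponent F]
    refine Ideal.sum_mem _ fun n _ => hK n _ ?_ ?_
    · rw [linearForms_univ_pow]
      exact homogeneousComponent_isHomogeneous n F
    · rw [← coeff_reesPresentation, RingHom.mem_ker.1 hF, Polynomial.coeff_zero]
  · rintro _ ⟨i, -, j, -, rfl⟩
    simp only [SetLike.mem_coe, RingHom.mem_ker, map_sub, map_mul, reesPresentation_X]
    rw [reesPresentation, aeval_C, aeval_C, Polynomial.algebraMap_eq]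
    ring

theorem map_reesPresentation_homogeneousSubmodule (n : ℕ) :
    (homogeneousSubmodule ι A n).map (reesPresentation σ).toLinearMap =
      Submodule.map (Polynomial.monomial n) (Ideal.span (Set.range σ) ^ n) := by
  rw [← Set.image_univ, ← map_aeval_linearForms_pow, linearForms_univ_pow, ← Submodule.map_comp]
  ext p
  simp only [Submodule.mem_map]
  refine exists_congr fun F => and_congr_right fun hF => ?_
  rw [AlgHom.toLinearMap_apply, reesPresentation_apply_of_isHomogeneous hF]
  rfl

end MvPolynomial

theorem Ideal.ofList_take_ofFn {A : Type*} [CommRing A] {k : ℕ} (σ : Fin k → A) {r : ℕ}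
    (hr : r ≤ k) : Ideal.ofList ((List.ofFn σ).take r) = Ideal.span (σ '' {i | (i : ℕ) < r}) := by
  rw [← Fin.ofFn_take_eq_take_ofFn hr, Ideal.ofList]
  congr 1
  ext x
  simp only [List.mem_ofFn, Fin.take_apply, Set.mem_image, Set.mem_ofPred_eq]
  constructor
  · rintro ⟨i, rfl⟩
    exact ⟨Fin.castLE hr i, i.isLt, rfl⟩
  · rintro ⟨i, hi, rfl⟩
    exact ⟨⟨i, hi⟩, rfl⟩

namespace RingTheory.Sequence.IsWeaklyRegular

variable {A : Type*} [CommRing A] {k : ℕ} {σ : Fin k → A}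

theorem mem_span_image_of_mul_mem (hσ : IsWeaklyRegular A (List.ofFn σ)) {r : ℕ} (hr : r < k)
    {a : A} (ha : σ ⟨r, hr⟩ * a ∈ Ideal.span (σ '' {i | (i : ℕ) < r})) :
    a ∈ Ideal.span (σ '' {i | (i : ℕ) < r}) := by
  have h := hσ.regular_mod_prev r (by simpa using hr)
  rw [Ideal.smul_eq_mul, Ideal.mul_top, Ideal.ofList_take_ofFn σ hr.le, List.getElem_ofFn] at h
  exact (isSMulRegular_quotient_iff_mem_of_smul_mem _ _).1 h a ha

theorem relationsAreKoszul_univ (hσ : IsWeaklyRegular A (List.ofFn σ)) :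
    MvPolynomial.RelationsAreKoszul σ Set.univ := by
  suffices h : ∀ r ≤ k, MvPolynomial.RelationsAreKoszul σ {i | (i : ℕ) < r} by
    simpa using h k le_rfl
  intro r
  induction r with
  | zero => simpa using MvPolynomial.relationsAreKoszul_empty
  | succ r ih =>
    intro hr
    have hinsert : {i : Fin k | (i : ℕ) < r + 1} = insert ⟨r, hr⟩ {i : Fin k | (i : ℕ) < r} := by
      ext i
      simp only [Set.mem_ofPred_eq, Set.mem_insert_iff, Fin.ext_iff]
      omega
    rw [hinsert]
    exact (ih (Nat.le_of_succ_le hr)).insert_of_regular fun a => hσ.mem_span_image_of_mul_mem hr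

end RingTheory.Sequence.IsWeaklyRegular

theorem reesPieceP_eq_map_monomial (A : Type) [CommRing A] (I : Ideal A) (n : ℕ) :
    reesPieceP A I n = Submodule.map (Polynomial.monomial n) (I ^ n) := by
  conv_rhs => rw [← Submodule.span_eq (I ^ n), ← Submodule.span_image]
  rw [reesPieceP]
  congr
  ext f
  simp [Polynomial.C_mul_X_pow_eq_monomial, eq_comm]

open MvPolynomial in
/-- For a regular sequence `σ₁, …, σ_k` in `A` with `I = (σ₁,…,σ_k)`, the Rees
algebra `⊕_{n≥0} Iⁿ tⁿ` is isomorphic as a graded `A`-algebra to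
`A[u₁,…,u_k]/(σ_i u_j - σ_j u_i : i < j)`, with each `u_i` of degree `1` mapping
to `σ_i t`. -/
theorem stmt5 (A : Type) [CommRing A] (k : ℕ) (σ : Fin k → A)
    (hreg : RingTheory.Sequence.IsRegular A (List.ofFn σ)) :
    ∃ e : (MvPolynomial (Fin k) A ⧸
        Ideal.span {f : MvPolynomial (Fin k) A | ∃ i j : Fin k, i < j ∧
          f = MvPolynomial.C (σ i) * X j - MvPolynomial.C (σ j) * X i})
      ≃ₐ[A] reesAlgebra (Ideal.span (Set.range σ)),
      (∀ i : Fin k,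
        (e (Ideal.Quotient.mk _ (X i)) : Polynomial A) = Polynomial.C (σ i) * Polynomial.X) ∧
      ∀ d : ℕ,
        Submodule.map
          ((Subalgebra.val _).toLinearMap.comp
            (e.toLinearMap.comp (Ideal.Quotient.mkₐ A _).toLinearMap))
          (homogeneousSubmodule (Fin k) A d)
        = reesPieceP A (Ideal.span (Set.range σ)) d := by
  have hker : Ideal.span {f : MvPolynomial (Fin k) A | ∃ i j : Fin k, i < j ∧
      f = MvPolynomial.C (σ i) * X j - MvPolynomial.C (σ j) * X i} =
        RingHom.ker (reesPresentation σ) := by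
    rw [ker_reesPresentation hreg.toIsWeaklyRegular.relationsAreKoszul_univ,
      koszulIdeal_univ_eq_span_lt]
  let e := (Ideal.quotientEquivAlgOfEq A hker).trans <|
    (Ideal.quotientKerEquivRange (reesPresentation σ)).trans <|
      Subalgebra.equivOfEq _ _ (range_reesPresentation σ)
  refine ⟨e, fun i => reesPresentation_X i, fun d => ?_⟩
  rw [reesPieceP_eq_map_monomial, ← map_reesPresentation_homogeneousSubmodule]
  rfl

end
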